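/- If P is a row-stochastic n×n matrix with all entries at least δ ∈ (0, 1/2], then the iterates x^{(k)} = P^k x^{(0)} converge: the range max_i x_i^{(k)} − min_i x_i^{(k)} ≤ (1−2δ)^k (max_i x_i^{(0)} − min_i x_i^{(0)}) tends to 0 geometrically, so all agents' values converge to a common limit. -/

import Mathlib

/-! Each row of a stochastic matrix with entries `≥ δ` puts weight `≥ δ` on the minimum and on
the maximum of `x`, so one step pulls the maximum down and the minimum up by `δ (max x - min x)`
each, and the range contracts by `1 - 2δ`. The minimum is nondecreasing and bounded by the initial
maximum, hence converges, and every coordinate is squeezed between it and minimum plus range. -/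

open Filter Topology

/-- Range (max minus min) of a vector on `Fin n`, `n > 0`. -/
noncomputable def vecRange {n : ℕ} (hn : 0 < n) (x : Fin n → ℝ) : ℝ :=
  Finset.univ.sup' (Finset.univ_nonempty_iff.mpr ⟨⟨0, hn⟩⟩) x -
    Finset.univ.inf' (Finset.univ_nonempty_iff.mpr ⟨⟨0, hn⟩⟩) x

namespace Matrix

open Finset

variable {ι : Type*} [Fintype ι] [DecidableEq ι] {P : Matrix ι ι ℝ} {δ : ℝ}

theorem mulVec_apply_le_sub_mul (hP : P ∈ rowStochastic ℝ ι) (hδ : ∀ i j, δ ≤ P i j)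
    {x : ι → ℝ} {M : ℝ} (hx : ∀ k, x k ≤ M) (i j : ι) :
    (P *ᵥ x) i ≤ M - δ * (M - x j) := by
  have hdefect : (P *ᵥ x) i = M - ∑ k, P i k * (M - x k) := by
    simp only [mul_sub, sum_sub_distrib, ← sum_mul, sum_row_of_mem_rowStochastic hP i, one_mul,
      sub_sub_cancel, mulVec, dotProduct]
  have hterm : P i j * (M - x j) ≤ ∑ k, P i k * (M - x k) :=
    single_le_sum (fun k _ => mul_nonneg (hP.1 i k) (sub_nonneg.2 (hx k))) (mem_univ j)
  have hδterm : δ * (M - x j) ≤ P i j * (M - x j) :=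
    mul_le_mul_of_nonneg_right (hδ i j) (sub_nonneg.2 (hx j))
  linarith

theorem add_mul_le_mulVec_apply (hP : P ∈ rowStochastic ℝ ι) (hδ : ∀ i j, δ ≤ P i j)
    {x : ι → ℝ} {m : ℝ} (hx : ∀ k, m ≤ x k) (i j : ι) :
    m + δ * (x j - m) ≤ (P *ᵥ x) i := by
  have h := mulVec_apply_le_sub_mul hP hδ (x := -x) (M := -m) (fun k => neg_le_neg (hx k)) i j
  rw [mulVec_neg, Pi.neg_apply, Pi.neg_apply] at h
  linarith

theorem mulVec_apply_le_sup' (hP : P ∈ rowStochastic ℝ ι) (hs : (univ : Finset ι).Nonempty)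
    (x : ι → ℝ) (i : ι) : (P *ᵥ x) i ≤ univ.sup' hs x := by
  simpa using mulVec_apply_le_sub_mul hP hP.1 (M := univ.sup' hs x)
    (fun k => le_sup' x (mem_univ k)) i i

theorem inf'_le_inf'_mulVec (hP : P ∈ rowStochastic ℝ ι) (hs : (univ : Finset ι).Nonempty)
    (x : ι → ℝ) : univ.inf' hs x ≤ univ.inf' hs (P *ᵥ x) :=
  le_inf' _ _ fun i _ => by
    simpa using add_mul_le_mulVec_apply hP hP.1 (m := univ.inf' hs x)
      (fun k => inf'_le x (mem_univ k)) i i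

theorem sup'_mulVec_sub_inf'_mulVec_le (hP : P ∈ rowStochastic ℝ ι) (hδ : ∀ i j, δ ≤ P i j)
    (hs : (univ : Finset ι).Nonempty) (x : ι → ℝ) :
    univ.sup' hs (P *ᵥ x) - univ.inf' hs (P *ᵥ x) ≤
      (1 - 2 * δ) * (univ.sup' hs x - univ.inf' hs x) := by
  obtain ⟨jmin, -, hjmin⟩ := exists_mem_eq_inf' hs x
  obtain ⟨jmax, -, hjmax⟩ := exists_mem_eq_sup' hs x
  have hmax :
      univ.sup' hs (P *ᵥ x) ≤ univ.sup' hs x - δ * (univ.sup' hs x - univ.inf' hs x) :=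
    sup'_le _ _ fun i _ =>
      hjmin ▸ mulVec_apply_le_sub_mul hP hδ (fun k => le_sup' x (mem_univ k)) i jmin
  have hmin :
      univ.inf' hs x + δ * (univ.sup' hs x - univ.inf' hs x) ≤ univ.inf' hs (P *ᵥ x) :=
    le_inf' _ _ fun i _ =>
      hjmax ▸ add_mul_le_mulVec_apply hP hδ (fun k => inf'_le x (mem_univ k)) i jmax
  linarith

theorem exists_tendsto_pow_mulVec_of_tendsto_sup'_sub_inf' (hP : P ∈ rowStochastic ℝ ι)
    (hs : (univ : Finset ι).Nonempty) (x : ι → ℝ)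
    (hrange : Tendsto (fun k => univ.sup' hs (P ^ k *ᵥ x) - univ.inf' hs (P ^ k *ᵥ x))
      atTop (𝓝 0)) :
    ∃ c, ∀ i, Tendsto (fun k => (P ^ k *ᵥ x) i) atTop (𝓝 c) := by
  set m : ℕ → ℝ := fun k => univ.inf' hs (P ^ k *ᵥ x)
  have hmono : Monotone m := monotone_nat_of_le_succ fun k => by
    simpa only [m, pow_succ', ← mulVec_mulVec] using inf'_le_inf'_mulVec hP hs (P ^ k *ᵥ x)
  have hbdd : BddAbove (Set.range m) := by
    obtain ⟨i, -⟩ := id hs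
    refine ⟨univ.sup' hs x, ?_⟩
    rintro _ ⟨k, rfl⟩
    exact (inf'_le _ (mem_univ i)).trans (mulVec_apply_le_sup' (pow_mem hP k) hs x i)
  refine ⟨⨆ k, m k, fun i => ?_⟩
  have hm := tendsto_atTop_ciSup hmono hbdd
  refine tendsto_of_tendsto_of_tendsto_of_le_of_le hm (by simpa using hm.add hrange)
    (fun k => inf'_le _ (mem_univ i)) fun k => ?_
  have hle := le_sup' (P ^ k *ᵥ x) (mem_univ i)
  simp only [m]
  linarith

end Matrix

theorem vecRange_nonneg {n : ℕ} (hn : 0 < n) (x : Fin n → ℝ) : 0 ≤ vecRange hn x :=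
  sub_nonneg.2 <| (Finset.inf'_le x (Finset.mem_univ ⟨0, hn⟩)).trans
    (Finset.le_sup' x (Finset.mem_univ ⟨0, hn⟩))

/-- Geometric ergodicity: if `P` is row-stochastic with all entries at least
`δ ∈ (0, 1/2]`, then the range of `x^{(k)} = P^k x^{(0)}` is bounded by
`(1 − 2δ)^k` times the initial range, tends to `0`, and all agents' values converge to
a common limit. -/
theorem gossip_geometric_convergence {n : ℕ} (hn : 0 < n)
    (δ : ℝ) (hδ0 : 0 < δ) (hδ2 : δ ≤ 1 / 2)
    (P : Matrix (Fin n) (Fin n) ℝ)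
    (hδP : ∀ i j, δ ≤ P i j) (hrow : ∀ i, ∑ j, P i j = 1)
    (x₀ : Fin n → ℝ) :
    (∀ k : ℕ, vecRange hn ((P ^ k).mulVec x₀) ≤ (1 - 2 * δ) ^ k * vecRange hn x₀) ∧
      Tendsto (fun k : ℕ => vecRange hn ((P ^ k).mulVec x₀)) atTop (𝓝 0) ∧
      ∃ c : ℝ, ∀ i : Fin n, Tendsto (fun k : ℕ => (P ^ k).mulVec x₀ i) atTop (𝓝 c) := by
  have hP : P ∈ Matrix.rowStochastic ℝ (Fin n) :=
    Matrix.mem_rowStochastic_iff_sum.2 ⟨fun i j => hδ0.le.trans (hδP i j), hrow⟩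
  have hstep (k : ℕ) : vecRange hn ((P ^ (k + 1)).mulVec x₀) ≤
      (1 - 2 * δ) * vecRange hn ((P ^ k).mulVec x₀) := by
    rw [pow_succ', ← Matrix.mulVec_mulVec]
    exact Matrix.sup'_mulVec_sub_inf'_mulVec_le hP hδP _ _
  have hgeom (k : ℕ) : vecRange hn ((P ^ k).mulVec x₀) ≤ (1 - 2 * δ) ^ k * vecRange hn x₀ := by
    simpa using le_geom (u := fun k => vecRange hn ((P ^ k).mulVec x₀)) (by linarith) k
      fun k _ => hstep k
  have hlim : Tendsto (fun k : ℕ => vecRange hn ((P ^ k).mulVec x₀)) atTop (𝓝 0) :=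
    squeeze_zero (fun k => vecRange_nonneg hn _) hgeom <| by
      simpa using (tendsto_pow_atTop_nhds_zero_of_lt_one (by linarith) (by linarith)).mul_const
        (vecRange hn x₀)
  exact ⟨hgeom, hlim, Matrix.exists_tendsto_pow_mulVec_of_tendsto_sup'_sub_inf' hP _ x₀ hlim⟩
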